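/- Let ε ∈ (0,1) and 0 ≤ β ≤ ε³/2880. Let F₁*, F₂* : ℝ → [0,1] be measurable with F₁*(v) ≥ 1 − 1/v for all v > 0, F₂*(v) ≥ 1 − 1/v² for all v > 0, and F₂*(v) = 1 for all v > 4/ε. Define F̃_i*(v) = min(1, F_i*(v) + √(8β·F_i*(v)·(1−F_i*(v))) + 7β). Then for every reserve r ∈ [0, 4/ε], AR(r, F₁*, F₂*) − AR(r, F̃₁*, F̃₂*) ≤ ε/4. -/

import Mathlib

/-!
The loss splits as `r·(G₁ r − F₁ r) + ∫_r^{4/ε} (G₂ − F₂)`. Shading moves `p` by at most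
`√(8β·p(1−p)) + 7β`, and AM–GM with a free weight `k` gives `√(8β·q) ≤ 4kβ + q/(2k)`.
The tail bounds give `r·F₁(1−F₁) ≤ r(1−F₁) ≤ 1` at the reserve and `F₂(1−F₂) ≤ min(1/4, 1/x²)`,
whose integral over `(0, ∞)` is `1`. So each of the two terms is at most
`(4k+7)β·(4/ε) + 1/(2k)`, and `k = 10/ε` makes their sum at most `ε/4`.
-/

open MeasureTheory

/-- The Anonymous Reserve revenue for reserve `r`, when `F1`, `F2` are the CDFs of the
highest and second-highest bid: `AR(r, F1, F2) = r·(1 − F1(r)) + ∫_r^∞ (1 − F2(x)) dx`. -/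
noncomputable def AR (r : ℝ) (F1 F2 : ℝ → ℝ) : ℝ :=
  r * (1 - F1 r) + ∫ x in Set.Ioi r, (1 - F2 x)

open Set

lemma Real.sqrt_mul_le_add_div {a b k : ℝ} (ha : 0 ≤ a) (hb : 0 ≤ b) (hk : 0 < k) :
    √(a * b) ≤ (k * a + b / k) / 2 := by
  rw [Real.sqrt_le_iff]
  refine ⟨by positivity, ?_⟩
  have : (k * a + b / k) ^ 2 - 4 * (a * b) = (k * a - b / k) ^ 2 := by field_simp; ring
  nlinarith [sq_nonneg (k * a - b / k)]

noncomputable def shading (β p : ℝ) : ℝ := min 1 (p + √(8 * β * p * (1 - p)) + 7 * β)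

section Shading

variable {β p : ℝ}

lemma le_shading (hβ : 0 ≤ β) (hp : p ≤ 1) : p ≤ shading β p :=
  le_min hp (by linarith [Real.sqrt_nonneg (8 * β * p * (1 - p))])

lemma shading_le_one : shading β p ≤ 1 := min_le_left _ _

lemma shading_mem_Icc (hβ : 0 ≤ β) (hp : p ∈ Icc 0 1) : shading β p ∈ Icc 0 1 :=
  ⟨hp.1.trans (le_shading hβ hp.2), shading_le_one⟩

lemma shading_one (hβ : 0 ≤ β) : shading β 1 = 1 := by
  simp [shading, hβ]

lemma continuous_shading : Continuous (shading β) := by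
  unfold shading; fun_prop

lemma shading_sub_le {k : ℝ} (hβ : 0 ≤ β) (hp : p ∈ Icc 0 1) (hk : 0 < k) :
    shading β p - p ≤ (4 * k + 7) * β + p * (1 - p) / (2 * k) := by
  have hq : 0 ≤ p * (1 - p) := mul_nonneg hp.1 (sub_nonneg.2 hp.2)
  have hshade : shading β p ≤ p + √(8 * β * (p * (1 - p))) + 7 * β := by
    rw [← mul_assoc]; exact min_le_right _ _
  have hsqrt := Real.sqrt_mul_le_add_div (by positivity : 0 ≤ 8 * β) hq hk
  have : (k * (8 * β) + p * (1 - p) / k) / 2 = 4 * k * β + p * (1 - p) / (2 * k) := by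
    field_simp; ring
  linarith

end Shading

lemma mul_one_sub_le_one_of_tail {r p : ℝ} (hr : 0 ≤ r) (htail : 0 < r → 1 - 1 / r ≤ p) :
    r * (1 - p) ≤ 1 := by
  rcases hr.eq_or_lt with rfl | hr
  · simp
  · have := htail hr
    calc r * (1 - p) ≤ r * (1 / r) := by gcongr; linarith
      _ = 1 := by field_simp

lemma mul_one_sub_le_min {p t : ℝ} (hp : p ∈ Icc 0 1) (htail : 1 - t ≤ p) :
    p * (1 - p) ≤ min (1 / 4) t :=
  le_min (by nlinarith [sq_nonneg (p - 1 / 2)]) (by nlinarith [hp.1, hp.2])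

theorem reserve_shading_loss_le {β k M r : ℝ} {F : ℝ → ℝ} (hβ : 0 ≤ β) (hk : 0 < k)
    (hF : ∀ v, F v ∈ Icc 0 1) (htail : ∀ v, 0 < v → 1 - 1 / v ≤ F v) (hr : r ∈ Icc 0 M) :
    r * (shading β (F r) - F r) ≤ (4 * k + 7) * β * M + 1 / (2 * k) := by
  obtain ⟨hr0, hrM⟩ := hr
  have hrF : r * (F r * (1 - F r)) ≤ 1 :=
    calc r * (F r * (1 - F r)) ≤ r * (1 - F r) :=
          mul_le_mul_of_nonneg_left (mul_le_of_le_one_left (sub_nonneg.2 (hF r).2) (hF r).2) hr0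
      _ ≤ 1 := mul_one_sub_le_one_of_tail hr0 (htail r)
  calc r * (shading β (F r) - F r)
      ≤ r * ((4 * k + 7) * β + F r * (1 - F r) / (2 * k)) :=
        mul_le_mul_of_nonneg_left (shading_sub_le hβ (hF r) hk) hr0
    _ = (4 * k + 7) * β * r + r * (F r * (1 - F r)) / (2 * k) := by ring
    _ ≤ (4 * k + 7) * β * M + 1 / (2 * k) := by gcongr

lemma integrableOn_Ioi_of_abs_le_of_eq_zero {f : ℝ → ℝ} {C M : ℝ} (hf : Measurable f)
    (hC : ∀ x, |f x| ≤ C) (hzero : ∀ x, M < x → f x = 0) (r : ℝ) :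
    IntegrableOn f (Ioi r) := by
  refine IntegrableOn.mono_set (IntegrableOn.union ?_ ?_) (Ioi_subset_Ioc_union_Ioi (b := M))
  · exact .of_bound measure_Ioc_lt_top hf.aestronglyMeasurable C (ae_of_all _ hC)
  · exact integrableOn_zero.congr_fun (fun x hx => (hzero x hx).symm) measurableSet_Ioi

lemma integrableOn_one_sub_of_eq_one {F : ℝ → ℝ} {M : ℝ} (hmeas : Measurable F)
    (hF : ∀ v, F v ∈ Icc 0 1) (hsupp : ∀ v, M < v → F v = 1) (r : ℝ) :
    IntegrableOn (fun x => 1 - F x) (Ioi r) :=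
  integrableOn_Ioi_of_abs_le_of_eq_zero (by fun_prop) (C := 1)
    (fun x => abs_le.2 ⟨by linarith [(hF x).2], by linarith [(hF x).1]⟩)
    (fun x hx => by rw [hsupp x hx, sub_self]) r

lemma AR_sub_AR {r : ℝ} {F1 F2 G1 G2 : ℝ → ℝ} (hF2 : IntegrableOn (fun x => 1 - F2 x) (Ioi r))
    (hG2 : IntegrableOn (fun x => 1 - G2 x) (Ioi r)) :
    AR r F1 F2 - AR r G1 G2 = r * (G1 r - F1 r) + ∫ x in Ioi r, (G2 x - F2 x) := by
  have : ∫ x in Ioi r, (G2 x - F2 x) = (∫ x in Ioi r, (1 - F2 x)) - ∫ x in Ioi r, (1 - G2 x) := by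
    rw [← integral_sub hF2 hG2]; congr 1; ext x; ring
  rw [this, AR, AR]; ring

lemma min_quarter_one_div_sq_of_le_two {x : ℝ} (hx : x ∈ Ioc 0 2) :
    min (1 / 4) (1 / x ^ 2) = 1 / 4 := by
  refine min_eq_left ?_
  rw [one_div_le_one_div (by norm_num) (by nlinarith [hx.1])]
  nlinarith [hx.1, hx.2]

lemma min_quarter_one_div_sq_of_two_lt {x : ℝ} (hx : x ∈ Ioi 2) :
    min (1 / 4) (1 / x ^ 2) = x ^ (-2 : ℝ) := by
  have hx0 : 0 < x := by linarith [mem_Ioi.1 hx]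
  rw [min_eq_right, Real.rpow_neg hx0.le, one_div, Real.rpow_two]
  rw [one_div_le_one_div (by positivity) (by norm_num)]
  nlinarith [mem_Ioi.1 hx]

lemma integrableOn_Ioi_min_quarter_one_div_sq :
    IntegrableOn (fun x : ℝ => min (1 / 4) (1 / x ^ 2)) (Ioi 0) := by
  rw [← Ioc_union_Ioi_eq_Ioi (zero_le_two : (0 : ℝ) ≤ 2)]
  refine IntegrableOn.union ?_ ?_
  · exact (integrableOn_const measure_Ioc_lt_top.ne).congr_fun
      (fun x hx => (min_quarter_one_div_sq_of_le_two hx).symm) measurableSet_Ioc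
  · exact (integrableOn_Ioi_rpow_of_lt (by norm_num) two_pos).congr_fun
      (fun x hx => (min_quarter_one_div_sq_of_two_lt hx).symm) measurableSet_Ioi

lemma integral_Ioi_min_quarter_one_div_sq :
    ∫ x in Ioi (0 : ℝ), min (1 / 4) (1 / x ^ 2) = 1 := by
  rw [← Ioc_union_Ioi_eq_Ioi (zero_le_two : (0 : ℝ) ≤ 2),
    setIntegral_union Ioc_disjoint_Ioi_same measurableSet_Ioi
      (integrableOn_Ioi_min_quarter_one_div_sq.mono_set Ioc_subset_Ioi_self)
      (integrableOn_Ioi_min_quarter_one_div_sq.mono_set (Ioi_subset_Ioi zero_le_two)),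
    setIntegral_congr_fun measurableSet_Ioc (fun x hx => min_quarter_one_div_sq_of_le_two hx),
    setIntegral_congr_fun measurableSet_Ioi (fun x hx => min_quarter_one_div_sq_of_two_lt hx),
    integral_Ioi_rpow_of_lt (by norm_num) two_pos, setIntegral_const, Real.volume_real_Ioc]
  norm_num

lemma setIntegral_min_quarter_one_div_sq_le_one {s : Set ℝ} (hs : s ⊆ Ioi 0) :
    ∫ x in s, min (1 / 4) (1 / x ^ 2) ≤ 1 :=
  (setIntegral_mono_set integrableOn_Ioi_min_quarter_one_div_sq
    (ae_of_all _ fun x => le_min (by norm_num) (by positivity)) hs.eventuallyLE).trans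
    integral_Ioi_min_quarter_one_div_sq.le

lemma integrableOn_shading_sub {β : ℝ} {F : ℝ → ℝ} (hβ : 0 ≤ β) (hF : ∀ v, F v ∈ Icc 0 1)
    (hmeas : Measurable F) (a b : ℝ) :
    IntegrableOn (fun x => shading β (F x) - F x) (Ioc a b) := by
  refine .of_bound measure_Ioc_lt_top
    ((continuous_shading.measurable.comp hmeas).sub hmeas).aestronglyMeasurable 1
    (ae_of_all _ fun x => ?_)
  have hG := shading_mem_Icc hβ (hF x)
  have hFG := le_shading hβ (hF x).2
  rw [Real.norm_eq_abs, abs_le]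
  constructor <;> linarith [(hF x).1, hG.2]

theorem integral_shading_loss_le {β k M r : ℝ} {F : ℝ → ℝ} (hβ : 0 ≤ β) (hk : 0 < k)
    (hF : ∀ v, F v ∈ Icc 0 1) (hmeas : Measurable F)
    (htail : ∀ v, 0 < v → 1 - 1 / v ^ 2 ≤ F v) (hsupp : ∀ v, M < v → F v = 1)
    (hr : r ∈ Icc 0 M) :
    ∫ x in Ioi r, (shading β (F x) - F x) ≤ (4 * k + 7) * β * M + 1 / (2 * k) := by
  obtain ⟨hr0, hrM⟩ := hr
  set c := (4 * k + 7) * β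
  have hc_int : IntegrableOn (fun _ : ℝ => c) (Ioc r M) := integrableOn_const measure_Ioc_lt_top.ne
  have hIoc : Ioc r M ⊆ Ioi 0 := Ioc_subset_Ioi_self.trans (Ioi_subset_Ioi hr0)
  have hbound_int : IntegrableOn (fun x : ℝ => min (1 / 4) (1 / x ^ 2)) (Ioc r M) :=
    integrableOn_Ioi_min_quarter_one_div_sq.mono_set hIoc
  have hpt : ∀ x ∈ Ioc r M,
      shading β (F x) - F x ≤ c + min (1 / 4) (1 / x ^ 2) / (2 * k) := fun x hx =>
    (shading_sub_le hβ (hF x) hk).trans (by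
      gcongr; exact mul_one_sub_le_min (hF x) (htail x (hr0.trans_lt hx.1)))
  have hbound_le := setIntegral_min_quarter_one_div_sq_le_one hIoc
  calc ∫ x in Ioi r, (shading β (F x) - F x)
      = ∫ x in Ioc r M, (shading β (F x) - F x) := by
        rw [← Ioc_union_Ioi_eq_Ioi hrM]
        refine integral_union_eq_left_of_forall measurableSet_Ioi fun x hx => ?_
        rw [hsupp x hx, shading_one hβ, sub_self]
    _ ≤ ∫ x in Ioc r M, (c + min (1 / 4) (1 / x ^ 2) / (2 * k)) :=
        setIntegral_mono_on (integrableOn_shading_sub hβ hF hmeas r M)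
          (hc_int.add (hbound_int.div_const _)) measurableSet_Ioc hpt
    _ = c * (M - r) + (∫ x in Ioc r M, min (1 / 4) (1 / x ^ 2)) / (2 * k) := by
        rw [integral_add hc_int (hbound_int.div_const _),
          integral_div, setIntegral_const, Real.volume_real_Ioc_of_le hrM, smul_eq_mul, mul_comm]
    _ ≤ c * M + 1 / (2 * k) := by gcongr; linarith

theorem ar_smoothness_truncated_regular_general
    (ε β : ℝ) (hε : ε ∈ Set.Ioo (0 : ℝ) 1) (hβ0 : 0 ≤ β) (hβ : β ≤ ε ^ 3 / 2880)
    (F1 F2 : ℝ → ℝ)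
    (hF1 : ∀ v, F1 v ∈ Set.Icc (0 : ℝ) 1) (hF2 : ∀ v, F2 v ∈ Set.Icc (0 : ℝ) 1)
    (hmeas2 : Measurable F2)
    (htail1 : ∀ v, 0 < v → 1 - 1 / v ≤ F1 v)
    (htail2 : ∀ v, 0 < v → 1 - 1 / v ^ 2 ≤ F2 v)
    (hsupp : ∀ v, 4 / ε < v → F2 v = 1)
    (G1 G2 : ℝ → ℝ)
    (hG1 : ∀ v, G1 v = min 1 (F1 v + Real.sqrt (8 * β * F1 v * (1 - F1 v)) + 7 * β))
    (hG2 : ∀ v, G2 v = min 1 (F2 v + Real.sqrt (8 * β * F2 v * (1 - F2 v)) + 7 * β)) :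
    ∀ r ∈ Set.Icc (0 : ℝ) (4 / ε), AR r F1 F2 - AR r G1 G2 ≤ ε / 4 := by
  obtain ⟨hε0, hε1⟩ := hε
  intro r hr
  obtain rfl : G1 = fun v => shading β (F1 v) := funext hG1
  obtain rfl : G2 = fun v => shading β (F2 v) := funext hG2
  have hk : 0 < 10 / ε := by positivity
  have hmeasG2 : Measurable fun v => shading β (F2 v) := continuous_shading.measurable.comp hmeas2
  rw [AR_sub_AR (integrableOn_one_sub_of_eq_one hmeas2 hF2 hsupp r)
    (integrableOn_one_sub_of_eq_one hmeasG2
      (fun v => shading_mem_Icc hβ0 (hF2 v)) (fun v hv => by rw [hsupp v hv, shading_one hβ0]) r)]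
  have hreserve := reserve_shading_loss_le hβ0 hk hF1 htail1 hr
  have hintegral := integral_shading_loss_le hβ0 hk hF2 hmeas2 htail2 hsupp hr
  have harith : 2 * ((4 * (10 / ε) + 7) * β * (4 / ε) + 1 / (2 * (10 / ε))) ≤ ε / 4 := by
    field_simp
    nlinarith [mul_pos hε0 hε0, pow_pos hε0 3]
  linarith

/-- Revenue smoothness for the truncated regular instance: with `β ≤ ε³/2880`, if
`F1*(v) ≥ 1 − 1/v`, `F2*(v) ≥ 1 − 1/v²` and `F2* = 1` beyond `4/ε`, then shading by
`S_F^β` loses at most `ε/4` revenue for every reserve `r ∈ [0, 4/ε]`. -/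
theorem ar_smoothness_truncated_regular
    (ε β : ℝ) (hε : ε ∈ Set.Ioo (0 : ℝ) 1) (hβ0 : 0 ≤ β) (hβ : β ≤ ε ^ 3 / 2880)
    (F1 F2 : ℝ → ℝ)
    (hF1 : ∀ v, F1 v ∈ Set.Icc (0 : ℝ) 1) (hF2 : ∀ v, F2 v ∈ Set.Icc (0 : ℝ) 1)
    (hmeas1 : Measurable F1) (hmeas2 : Measurable F2)
    (htail1 : ∀ v, 0 < v → 1 - 1 / v ≤ F1 v)
    (htail2 : ∀ v, 0 < v → 1 - 1 / v ^ 2 ≤ F2 v)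
    (hsupp : ∀ v, 4 / ε < v → F2 v = 1)
    (G1 G2 : ℝ → ℝ)
    (hG1 : ∀ v, G1 v = min 1 (F1 v + Real.sqrt (8 * β * F1 v * (1 - F1 v)) + 7 * β))
    (hG2 : ∀ v, G2 v = min 1 (F2 v + Real.sqrt (8 * β * F2 v * (1 - F2 v)) + 7 * β)) :
    ∀ r ∈ Set.Icc (0 : ℝ) (4 / ε), AR r F1 F2 - AR r G1 G2 ≤ ε / 4 :=
  ar_smoothness_truncated_regular_general ε β hε hβ0 hβ F1 F2 hF1 hF2 hmeas2 htail1 htail2 hsupp G1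
    G2 hG1 hG2
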